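/- Let S = conv{w₁,...,w_{n+1}} be a simplex and f : S → R^n an affine vector field. Let V(x) = max_{i=1..r} nᵢ·x and for x ∈ S define I(x) = {i : nᵢ·x = V(x)}. Let x̄ ∈ S with barycentric representation x̄ = Σ_s α_s v_s where α_s > 0, Σ α_s = 1 and the v_s are vertices of the smallest face of S containing x̄ in its relative interior. If I(x̄) ⊆ I(v_s) for all s and max_{i∈I(v_s)} nᵢ·f(v_s) ≤ 0 for all s, then max_{i∈I(x̄)} nᵢ·f(x̄) ≤ Σ_s α_s max_{i∈I(v_s)} nᵢ·f(v_s) ≤ 0, with equality zero only if max_{i∈I(v_s)} nᵢ·f(v_s) = 0 for all s. -/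
import Mathlib


open Matrix

/-- Convexity estimate for the Dini derivative of `V(x) = maxᵢ nᵢ·x` along an affine
vector field: with `x̄ = Σ αₛ vₛ` (`αₛ > 0`, `Σαₛ = 1`), `I(x̄) ⊆ I(vₛ)`, and
`Mₛ = max_{i∈I(vₛ)} nᵢ·f(vₛ) ≤ 0`, one has `Mx̄ ≤ Σ αₛ Mₛ ≤ 0`, with `Mx̄ = 0`
only if all `Mₛ = 0`. -/
theorem dini_convexity {n r k : ℕ} [NeZero r] (nv : Fin r → (Fin n → ℝ))
    (f : (Fin n → ℝ) →ᵃ[ℝ] (Fin n → ℝ))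
    (V : (Fin n → ℝ) → ℝ)
    (hV : ∀ x, V x = Finset.univ.sup' Finset.univ_nonempty (fun i => nv i ⬝ᵥ x))
    (v : Fin k → (Fin n → ℝ)) (α : Fin k → ℝ)
    (hαpos : ∀ s, 0 < α s) (hαsum : ∑ s, α s = 1)
    (xb : Fin n → ℝ) (hxb : xb = ∑ s, α s • v s)
    (hIsub : ∀ s, ∀ i, nv i ⬝ᵥ xb = V xb → nv i ⬝ᵥ v s = V (v s))
    (M : Fin k → ℝ)
    (hM : ∀ s, IsGreatest {y | ∃ i, nv i ⬝ᵥ v s = V (v s) ∧ y = nv i ⬝ᵥ f (v s)} (M s))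
    (hMneg : ∀ s, M s ≤ 0)
    (Mx : ℝ)
    (hMx : IsGreatest {y | ∃ i, nv i ⬝ᵥ xb = V xb ∧ y = nv i ⬝ᵥ f xb} Mx) :
    Mx ≤ ∑ s, α s * M s ∧ (∑ s, α s * M s) ≤ 0 ∧ (Mx = 0 → ∀ s, M s = 0) := by
  -- f maps the affine combination to the affine combination of images
  have hfxb : f xb = ∑ s, α s • f (v s) := by
    have h1 : xb = Finset.univ.affineCombination ℝ v α := by
      rw [hxb, Finset.affineCombination_eq_linear_combination _ _ _ hαsum]
    have h2 := Finset.map_affineCombination (k := ℝ) Finset.univ v α hαsum f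
    rw [h1, h2, Finset.affineCombination_eq_linear_combination _ _ _ hαsum]; rfl
  have key : ∀ i, nv i ⬝ᵥ f xb = ∑ s, α s * (nv i ⬝ᵥ f (v s)) := by
    intro i
    rw [hfxb]
    simp only [dotProduct, Finset.sum_apply, Pi.smul_apply, smul_eq_mul,
      Finset.mul_sum]
    rw [Finset.sum_comm]
    congr 1; ext s; congr 1; ext j; ring
  obtain ⟨⟨i, hiact, hieq⟩, hub⟩ := hMx
  have hMxle : Mx ≤ ∑ s, α s * M s := by
    rw [hieq, key i]
    apply Finset.sum_le_sum
    intro s _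
    have : nv i ⬝ᵥ f (v s) ≤ M s := (hM s).2 ⟨i, hIsub s i hiact, rfl⟩
    exact mul_le_mul_of_nonneg_left this (hαpos s).le
  have hterm : ∀ s : Fin k, α s * M s ≤ 0 := fun s =>
    mul_nonpos_of_nonneg_of_nonpos (hαpos s).le (hMneg s)
  have hsum0 : ∑ s, α s * M s ≤ 0 :=
    Finset.sum_nonpos fun s _ => hterm s
  refine ⟨hMxle, hsum0, fun hMx0 s => ?_⟩
  have hsumeq : ∑ s, α s * M s = 0 :=
    le_antisymm hsum0 (hMx0 ▸ hMxle)
  have := (Finset.sum_eq_zero_iff_of_nonpos (fun s _ => hterm s)).mp hsumeq s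
    (Finset.mem_univ s)
  have := mul_eq_zero.mp this
  rcases this with h | h
  · exact absurd h (hαpos s).ne'
  · exact h
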